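/- arXiv:1902.03405 — 8 statements merged into one kernel-verified Lean document; each statement's English description precedes it below -/
import Mathlib

section
/- For every natural number n, real coefficients a_0, ..., a_n, and delay parameters q_0 = 1 and 0 < q_i < 1 for i = 1, ..., n, the series Σ_{m=0}^∞ (x^m / m!) (ā; q̄)_m converges absolutely for every real x. -/
/-! Every factor `∑ i, a i * q i ^ j` of `(ā; q̄)_m` is bounded by `C = ∑ i, |a i|` because
`|q i| ≤ 1`, so the `m`-th term is dominated by `(|x| C)^m / m!`, the terms of `exp (|x| C)`. -/

open Finset

lemma abs_sum_mul_pow_le_sum_abs {ι : Type*} [Fintype ι] (a q : ι → ℝ)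
    (hq : ∀ i, |q i| ≤ 1) (j : ℕ) :
    |∑ i, a i * q i ^ j| ≤ ∑ i, |a i| := by
  refine (abs_sum_le_sum_abs _ _).trans (sum_le_sum fun i _ => ?_)
  rw [abs_mul, abs_pow]
  exact mul_le_of_le_one_right (abs_nonneg _) (pow_le_one₀ (abs_nonneg _) (hq i))

lemma summable_abs_pow_div_factorial_mul_prod_of_abs_le {c : ℕ → ℝ} {C : ℝ}
    (hc : ∀ j, |c j| ≤ C) (x : ℝ) :
    Summable fun m : ℕ => |x ^ m / (m.factorial : ℝ) * ∏ j ∈ range m, c j| := by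
  refine .of_nonneg_of_le (fun m => abs_nonneg _) (fun m => ?_)
    (Real.summable_pow_div_factorial (|x| * C))
  have hprod : |∏ j ∈ range m, c j| ≤ C ^ m :=
    calc |∏ j ∈ range m, c j| = ∏ j ∈ range m, |c j| := abs_prod _ _
      _ ≤ ∏ _j ∈ range m, C := prod_le_prod (fun j _ => abs_nonneg _) fun j _ => hc j
      _ = C ^ m := by rw [prod_const, card_range]
  calc |x ^ m / (m.factorial : ℝ) * ∏ j ∈ range m, c j|
      = |x| ^ m * |∏ j ∈ range m, c j| / m.factorial := by
        rw [abs_mul, abs_div, abs_pow, Nat.abs_cast, div_mul_eq_mul_div]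
    _ ≤ |x| ^ m * C ^ m / m.factorial := by gcongr
    _ = (|x| * C) ^ m / m.factorial := by rw [mul_pow]

/-- The series `Σ_{m=0}^∞ (x^m / m!) (ā; q̄)_m` converges absolutely for every real `x`. -/
theorem statement1 (n : ℕ) (a q : Fin (n + 1) → ℝ)
    (hq0 : q 0 = 1) (hq : ∀ i : Fin (n + 1), i ≠ 0 → 0 < q i ∧ q i < 1)
    (x : ℝ) :
    Summable (fun m : ℕ =>
      |x ^ m / (Nat.factorial m : ℝ) * ∏ j ∈ Finset.range m, ∑ i, a i * q i ^ j|) := by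
  have hq_abs : ∀ i, |q i| ≤ 1 := fun i => by
    by_cases hi : i = 0
    · simp [hi, hq0]
    · exact abs_le.mpr ⟨by linarith [(hq i hi).1], (hq i hi).2.le⟩
  exact summable_abs_pow_div_factorial_mul_prod_of_abs_le
    (abs_sum_mul_pow_le_sum_abs a q hq_abs) x
end

section
/- Let n ∈ ℕ, a_0, ..., a_n ∈ ℝ, and q_0 = 1, 0 < q_i < 1 for i = 1, ..., n. Then the function y(x) = R(ā; q̄; x) = Σ_{m=0}^∞ (x^m / m!) (ā; q̄)_m satisfies y(0) = 1 and is differentiable at every real x with y′(x) = Σ_{i=0}^n a_i · y(q_i x); that is, R(ā; q̄; ·) is an exact solution of the multiple proportional delay differential equation y′(x) = Σ_{i=0}^n a_i y(q_i x), y(0) = 1. -/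
/-!
Since `|q_i| ≤ 1`, every factor `Σ a_i q_i^j` of `(ā; q̄)_m` is bounded by `Σ |a_i|`, so the
coefficients grow at most geometrically and the series is an entire exponential generating
function, which can be differentiated termwise: its derivative is the generating function of the
shifted coefficients `(ā; q̄)_{m+1}`. Splitting off the last factor,
`x^m (ā; q̄)_{m+1} = Σ_i a_i (q_i x)^m (ā; q̄)_m`, which is the delay equation termwise.
-/

open Finset Nat

section ExpGenFun

variable {𝕜 : Type*} [RCLike 𝕜]

noncomputable def expGenFun (c : ℕ → 𝕜) (x : 𝕜) : 𝕜 := ∑' m, x ^ m / m ! * c m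

theorem expGenFun_zero (c : ℕ → 𝕜) : expGenFun c 0 = c 0 := by
  rw [expGenFun, tsum_eq_single 0 fun m hm => by simp [zero_pow hm]]
  simp

theorem summable_pow_div_factorial_mul_geometric (r A C : ℝ) :
    Summable fun m => r ^ m / m ! * (A * C ^ m) :=
  ((Real.summable_pow_div_factorial (r * C)).mul_left A).congr fun m => by ring

theorem norm_pow_div_factorial_mul_le {y c : 𝕜} {r B : ℝ} (hy : ‖y‖ ≤ r) (hc : ‖c‖ ≤ B)
    (m : ℕ) : ‖y ^ m / m ! * c‖ ≤ r ^ m / m ! * B := by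
  rw [norm_mul, norm_div, norm_pow, RCLike.norm_natCast]
  exact mul_le_mul (by gcongr) hc (norm_nonneg c) (by positivity [(norm_nonneg y).trans hy])

theorem summable_pow_div_factorial_mul {c : ℕ → 𝕜} {A C : ℝ} (hc : ∀ m, ‖c m‖ ≤ A * C ^ m)
    (x : 𝕜) : Summable fun m => x ^ m / m ! * c m :=
  .of_norm_bounded (summable_pow_div_factorial_mul_geometric ‖x‖ A C)
    fun m => norm_pow_div_factorial_mul_le le_rfl (hc m) m

theorem hasDerivAt_pow_succ_div_factorial (k : ℕ) (y : 𝕜) :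
    HasDerivAt (fun y : 𝕜 => y ^ (k + 1) / ((k + 1) ! : 𝕜)) (y ^ k / (k ! : 𝕜)) y := by
  refine ((hasDerivAt_pow (k + 1) y).div_const ((k + 1) ! : 𝕜)).congr_deriv ?_
  rw [factorial_succ, cast_mul]
  field_simp
  push_cast
  ring

theorem hasDerivAt_expGenFun {c : ℕ → 𝕜} {A C : ℝ} (hc : ∀ m, ‖c m‖ ≤ A * C ^ m) (x : 𝕜) :
    HasDerivAt (expGenFun c) (expGenFun (fun m => c (m + 1)) x) x := by
  have hc_succ (k : ℕ) : ‖c (k + 1)‖ ≤ A * C * C ^ k :=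
    (hc (k + 1)).trans_eq (by ring)
  have hshift : expGenFun c = fun y => c 0 + ∑' k, y ^ (k + 1) / ((k + 1) ! : 𝕜) * c (k + 1) := by
    funext y
    rw [expGenFun, (summable_pow_div_factorial_mul hc y).tsum_eq_zero_add]
    simp
  -- The derivative of each term after the constant one is again a term of the series, and the
  -- derivatives are summably bounded on every ball, which is all the termwise theorem needs.
  set r := ‖x‖ + 1
  have hx : x ∈ Metric.ball (0 : 𝕜) r := by simp [r]
  have hseries := hasDerivAt_tsum_of_isPreconnected
    (summable_pow_div_factorial_mul_geometric r (A * C) C) Metric.isOpen_ball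
    (convex_ball 0 r).isPreconnected
    (fun k y _ => (hasDerivAt_pow_succ_div_factorial k y).mul_const (c (k + 1)))
    (fun k y hy => norm_pow_div_factorial_mul_le (mem_ball_zero_iff.mp hy).le (hc_succ k) k)
    hx ((summable_nat_add_iff 1).mpr (summable_pow_div_factorial_mul hc x)) hx
  rw [hshift]
  exact hseries.const_add (c 0)

end ExpGenFun

section MultiPochhammer

variable {𝕜 ι : Type*} [RCLike 𝕜] [Fintype ι]

/-- The symbol `(ā; q̄)_m`. -/
def multiPochhammer (a q : ι → 𝕜) (m : ℕ) : 𝕜 := ∏ j ∈ range m, ∑ i, a i * q i ^ j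

variable (a : ι → 𝕜) {q : ι → 𝕜}

@[simp]
theorem multiPochhammer_zero : multiPochhammer a q 0 = 1 := prod_range_zero _

theorem multiPochhammer_succ (m : ℕ) :
    multiPochhammer a q (m + 1) = multiPochhammer a q m * ∑ i, a i * q i ^ m :=
  prod_range_succ _ m

theorem norm_multiPochhammer_le (hq : ∀ i, ‖q i‖ ≤ 1) (m : ℕ) :
    ‖multiPochhammer a q m‖ ≤ (∑ i, ‖a i‖) ^ m := by
  have hfactor (j : ℕ) : ‖∑ i, a i * q i ^ j‖ ≤ ∑ i, ‖a i‖ :=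
    (norm_sum_le _ _).trans <| sum_le_sum fun i _ => by
      rw [norm_mul, norm_pow]
      exact mul_le_of_le_one_right (norm_nonneg _) (pow_le_one₀ (norm_nonneg _) (hq i))
  rw [multiPochhammer, norm_prod]
  exact (prod_le_prod (fun _ _ => norm_nonneg _) fun j _ => hfactor j).trans_eq (by simp)

theorem pow_div_factorial_mul_multiPochhammer_succ (x : 𝕜) (m : ℕ) :
    x ^ m / m ! * multiPochhammer a q (m + 1) =
      ∑ i, a i * ((q i * x) ^ m / m ! * multiPochhammer a q m) := by
  rw [multiPochhammer_succ, mul_sum, mul_sum]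
  refine sum_congr rfl fun i _ => ?_
  ring

theorem hasDerivAt_expGenFun_multiPochhammer (hq : ∀ i, ‖q i‖ ≤ 1) (x : 𝕜) :
    HasDerivAt (expGenFun (multiPochhammer a q))
      (∑ i, a i * expGenFun (multiPochhammer a q) (q i * x)) x := by
  have hbound (m : ℕ) : ‖multiPochhammer a q m‖ ≤ 1 * (∑ i, ‖a i‖) ^ m :=
    (norm_multiPochhammer_le a hq m).trans_eq (one_mul _).symm
  refine (hasDerivAt_expGenFun hbound x).congr_deriv ?_
  simp only [expGenFun, pow_div_factorial_mul_multiPochhammer_succ]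
  rw [Summable.tsum_finsetSum fun i _ => (summable_pow_div_factorial_mul hbound _).mul_left (a i)]
  simp only [tsum_mul_left]

end MultiPochhammer

/-- `y(x) = R(ā; q̄; x)` satisfies `y(0) = 1` and solves the multiple proportional delay
differential equation `y'(x) = Σ_{i=0}^n a_i y(q_i x)` at every real `x`. -/
theorem statement3 (n : ℕ) (a q : Fin (n + 1) → ℝ)
    (hq0 : q 0 = 1) (hq : ∀ i : Fin (n + 1), i ≠ 0 → 0 < q i ∧ q i < 1)
    (R : ℝ → ℝ)
    (hR : ∀ x : ℝ, R x = ∑' m : ℕ,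
      x ^ m / (Nat.factorial m : ℝ) * ∏ j ∈ Finset.range m, ∑ i, a i * q i ^ j) :
    R 0 = 1 ∧ ∀ x : ℝ, HasDerivAt R (∑ i, a i * R (q i * x)) x := by
  have hRdef : R = expGenFun (multiPochhammer a q) := funext hR
  have hq_norm (i : Fin (n + 1)) : ‖q i‖ ≤ 1 := by
    rw [Real.norm_eq_abs, abs_le]
    rcases eq_or_ne i 0 with rfl | hi
    · simp [hq0]
    · exact ⟨by linarith [hq i hi], (hq i hi).2.le⟩
  subst hRdef
  exact ⟨by simp [expGenFun_zero], hasDerivAt_expGenFun_multiPochhammer a hq_norm⟩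
end

section
/- Let n ∈ ℕ, q_0 = 1, 0 < q_i < 1 for i = 1, ..., n, and a_i ≥ 0 for i = 0, 1, ..., n. Then for all x with 0 ≤ x < ∞, the two-sided bound e^{a_0 x} ≤ R(ā; q̄; x) ≤ e^{(Σ_{i=0}^n a_i) x} holds. -/
/-!
Every factor `∑ i, a i * q i ^ j` of the product lies between `a 0` (the `i = 0` summand, as
`q 0 = 1`) and `∑ i, a i` (as `q i ^ j ≤ 1`). So the `m`-th term of the series lies between
the `m`-th terms of the exponential series of `a 0 * x` and of `(∑ i, a i) * x`, and summing
termwise gives the bounds.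
-/

open Finset
open scoped Nat

/-- `R(ā; q̄; x)` is `expProdSeries (fun j => ∑ i, a i * q i ^ j) x`. -/
noncomputable def expProdSeries (c : ℕ → ℝ) (x : ℝ) : ℝ :=
  ∑' m : ℕ, x ^ m / (m ! : ℝ) * ∏ j ∈ range m, c j

lemma Real.hasSum_pow_div_factorial_exp (y : ℝ) :
    HasSum (fun m : ℕ => y ^ m / (m ! : ℝ)) (Real.exp y) := by
  rw [Real.exp_eq_exp_ℝ]
  exact NormedSpace.expSeries_div_hasSum_exp y

section ExpProdSeries

variable {c : ℕ → ℝ} {b B x : ℝ}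

lemma pow_div_factorial_mul_prod_le (hx : 0 ≤ x) (hc : ∀ j, 0 ≤ c j) (hcB : ∀ j, c j ≤ B)
    (m : ℕ) : x ^ m / (m ! : ℝ) * ∏ j ∈ range m, c j ≤ (B * x) ^ m / m ! := by
  calc x ^ m / (m ! : ℝ) * ∏ j ∈ range m, c j ≤ x ^ m / m ! * ∏ _j ∈ range m, B := by
        gcongr
        exacts [fun j _ => hc j, hcB _]
    _ = (B * x) ^ m / m ! := by simp; ring

lemma le_pow_div_factorial_mul_prod (hx : 0 ≤ x) (hb : 0 ≤ b) (hbc : ∀ j, b ≤ c j) (m : ℕ) :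
    (b * x) ^ m / m ! ≤ x ^ m / (m ! : ℝ) * ∏ j ∈ range m, c j := by
  calc (b * x) ^ m / m ! = x ^ m / (m ! : ℝ) * ∏ _j ∈ range m, b := by simp; ring
    _ ≤ x ^ m / (m ! : ℝ) * ∏ j ∈ range m, c j := by gcongr with j; exact hbc j

lemma summable_pow_div_factorial_mul_prod (hx : 0 ≤ x) (hc : ∀ j, 0 ≤ c j)
    (hcB : ∀ j, c j ≤ B) :
    Summable fun m : ℕ => x ^ m / (m ! : ℝ) * ∏ j ∈ range m, c j :=
  .of_nonneg_of_le (fun m => by have := prod_nonneg fun j (_ : j ∈ range m) => hc j; positivity)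
    (pow_div_factorial_mul_prod_le hx hc hcB) (Real.summable_pow_div_factorial _)

lemma expProdSeries_le_exp (hx : 0 ≤ x) (hc : ∀ j, 0 ≤ c j) (hcB : ∀ j, c j ≤ B) :
    expProdSeries c x ≤ Real.exp (B * x) :=
  hasSum_le (pow_div_factorial_mul_prod_le hx hc hcB)
    (summable_pow_div_factorial_mul_prod hx hc hcB).hasSum
    (Real.hasSum_pow_div_factorial_exp _)

lemma exp_le_expProdSeries (hx : 0 ≤ x) (hb : 0 ≤ b) (hbc : ∀ j, b ≤ c j)
    (hcB : ∀ j, c j ≤ B) : Real.exp (b * x) ≤ expProdSeries c x :=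
  hasSum_le (le_pow_div_factorial_mul_prod hx hb hbc) (Real.hasSum_pow_div_factorial_exp _)
    (summable_pow_div_factorial_mul_prod hx (fun j => hb.trans (hbc j)) hcB).hasSum

end ExpProdSeries

section Coefficients

variable {ι : Type*} [Fintype ι] {a q : ι → ℝ}

lemma le_sum_mul_pow (ha : ∀ i, 0 ≤ a i) (hq : ∀ i, 0 ≤ q i) {i₀ : ι} (hq₀ : q i₀ = 1)
    (j : ℕ) : a i₀ ≤ ∑ i, a i * q i ^ j := by
  simpa [hq₀] using
    single_le_sum (fun i _ => mul_nonneg (ha i) (pow_nonneg (hq i) j)) (mem_univ i₀)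

lemma sum_mul_pow_le_sum (ha : ∀ i, 0 ≤ a i) (hq : ∀ i, 0 ≤ q i) (hq1 : ∀ i, q i ≤ 1)
    (j : ℕ) : ∑ i, a i * q i ^ j ≤ ∑ i, a i :=
  sum_le_sum fun i _ => mul_le_of_le_one_right (ha i) (pow_le_one₀ (hq i) (hq1 i))

end Coefficients

/-- For nonnegative coefficients `a_i ≥ 0`, the function `R(ā; q̄; x)` satisfies the
two-sided bound `e^{a_0 x} ≤ R(ā; q̄; x) ≤ e^{(Σ_{i=0}^n a_i) x}` for all `0 ≤ x < ∞`. -/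
theorem statement7 (n : ℕ) (a q : Fin (n + 1) → ℝ)
    (hq0 : q 0 = 1) (hq : ∀ i : Fin (n + 1), i ≠ 0 → 0 < q i ∧ q i < 1)
    (ha : ∀ i : Fin (n + 1), 0 ≤ a i)
    (x : ℝ) (hx : 0 ≤ x) :
    Real.exp (a 0 * x) ≤
        (∑' m : ℕ,
          x ^ m / (Nat.factorial m : ℝ) * ∏ j ∈ Finset.range m, ∑ i, a i * q i ^ j) ∧
      (∑' m : ℕ,
          x ^ m / (Nat.factorial m : ℝ) * ∏ j ∈ Finset.range m, ∑ i, a i * q i ^ j) ≤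
        Real.exp ((∑ i, a i) * x) := by
  have hq_unit : ∀ i, 0 ≤ q i ∧ q i ≤ 1 := fun i => by
    by_cases hi : i = 0
    · simp [hi, hq0]
    · exact ⟨(hq i hi).1.le, (hq i hi).2.le⟩
  have hlow := le_sum_mul_pow ha (fun i => (hq_unit i).1) hq0
  have hhigh := sum_mul_pow_le_sum ha (fun i => (hq_unit i).1) (fun i => (hq_unit i).2)
  exact ⟨exp_le_expProdSeries hx (ha 0) hlow hhigh,
    expProdSeries_le_exp hx (fun j => (ha 0).trans (hlow j)) hhigh⟩
end

section
/- Let n ∈ ℕ, b > 0, and let f be a continuous real-valued function of (x, y_0, ..., y_n) ∈ [0, b] × ℝ^{n+1} satisfying the Lipschitz condition |f(x, y_0, ..., y_n) − f(x, u_0, ..., u_n)| ≤ Σ_{i=0}^n L_i |y_i − u_i| with each L_i ≥ 0. Let q_0 = 1 and 0 < q_i < 1 for i = 1, ..., n. If y and z are continuous functions on [0, b] both satisfying the integral equation w(x) = 1 + ∫_0^x f(t, w(q_0 t), w(q_1 t), ..., w(q_n t)) dt for all x ∈ [0, b], then y = z on [0, b]. -/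
/-!
Let `D = |y - z|`, bounded by `C` on `[0, b]`. Subtracting the two integral equations and using
the Lipschitz condition gives `D x ≤ S ∫₀ˣ B` whenever `D ≤ B` on `[0, x]` for a monotone `B`,
where `S = ∑ Lᵢ`: since `0 < qᵢ ≤ 1`, the delayed arguments `qᵢ t` stay in `[0, t]`, and
monotonicity gives `B (qᵢ t) ≤ B t`. Iterating from `B = C` yields `D x ≤ C (S x)ᵏ / k!` for
every `k`, and the right-hand side tends to `0`.
-/

open MeasureTheory Set

section VolterraInequality

variable {D : ℝ → ℝ} {b C S : ℝ}

theorem le_pow_div_factorial_of_le_mul_integral (hC : 0 ≤ C) (hS : 0 ≤ S)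
    (hDC : ∀ x ∈ Icc 0 b, D x ≤ C)
    (hstep : ∀ B : ℝ → ℝ, Continuous B → ∀ x ∈ Icc 0 b, MonotoneOn B (Icc 0 x) →
      (∀ t ∈ Icc 0 x, D t ≤ B t) → D x ≤ S * ∫ t in 0..x, B t) (k : ℕ) :
    ∀ x ∈ Icc 0 b, D x ≤ C * (S * x) ^ k / k.factorial := by
  induction k with
  | zero => simpa using hDC
  | succ k ih =>
    intro x hx
    have hcont : Continuous fun t : ℝ => C * S ^ k / k.factorial * t ^ k := by fun_prop
    have hmono : MonotoneOn (fun t : ℝ => C * S ^ k / k.factorial * t ^ k) (Icc 0 x) :=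
      fun s hs t _ hst => by dsimp only; gcongr; exact hs.1
    have hle : ∀ t ∈ Icc 0 x, D t ≤ C * S ^ k / k.factorial * t ^ k := fun t ht =>
      (ih t (Icc_subset_Icc_right hx.2 ht)).trans_eq (by ring)
    calc D x ≤ S * ∫ t in 0..x, C * S ^ k / k.factorial * t ^ k := hstep _ hcont x hx hmono hle
      _ = C * (S * x) ^ (k + 1) / (k + 1).factorial := by
        rw [intervalIntegral.integral_const_mul, integral_pow, Nat.factorial_succ]
        push_cast
        field_simp
        ring

theorem nonpos_of_le_mul_integral (hS : 0 ≤ S)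
    (hDC : ∀ x ∈ Icc 0 b, D x ≤ C)
    (hstep : ∀ B : ℝ → ℝ, Continuous B → ∀ x ∈ Icc 0 b, MonotoneOn B (Icc 0 x) →
      (∀ t ∈ Icc 0 x, D t ≤ B t) → D x ≤ S * ∫ t in 0..x, B t) :
    ∀ x ∈ Icc 0 b, D x ≤ 0 := by
  intro x hx
  have hDC' : ∀ x ∈ Icc 0 b, D x ≤ max C 0 := fun x hx => (hDC x hx).trans (le_max_left _ _)
  have hlim : Filter.Tendsto (fun k : ℕ => max C 0 * (S * x) ^ k / k.factorial)
      Filter.atTop (nhds 0) := by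
    simpa [mul_div_assoc] using
      (FloorSemiring.tendsto_pow_div_factorial_atTop (S * x)).const_mul (max C 0)
  exact ge_of_tendsto' hlim fun k =>
    le_pow_div_factorial_of_le_mul_integral (le_max_right _ _) hS hDC' hstep k x hx

end VolterraInequality

theorem mul_mem_Icc_of_mem_unitInterval {q t b : ℝ} (hq : q ∈ Icc 0 1) (ht : t ∈ Icc 0 b) :
    q * t ∈ Icc 0 b :=
  ⟨mul_nonneg hq.1 ht.1, (mul_le_of_le_one_left ht.1 hq.2).trans ht.2⟩

section DelayIntegralEquation

variable {ι : Type*} {b : ℝ} {f : ℝ → (ι → ℝ) → ℝ} {q : ι → ℝ}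

theorem ContinuousOn.comp_delays
    (hf : ContinuousOn (fun p : ℝ × (ι → ℝ) => f p.1 p.2) (Icc 0 b ×ˢ univ))
    (hq : ∀ i, q i ∈ Icc 0 1) {w : ℝ → ℝ} (hw : ContinuousOn w (Icc 0 b)) :
    ContinuousOn (fun t => f t fun i => w (q i * t)) (Icc 0 b) := by
  have hpair : ContinuousOn (fun t => (t, fun i => w (q i * t))) (Icc 0 b) :=
    continuousOn_id.prodMk <| continuousOn_pi.2 fun i =>
      hw.comp (continuous_const_mul (q i)).continuousOn fun t ht =>
        mul_mem_Icc_of_mem_unitInterval (hq i) ht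
  exact hf.comp hpair fun t ht => ⟨ht, mem_univ _⟩

theorem abs_sub_le_mul_integral_of_integral_eq [Fintype ι] {L : ι → ℝ} (hL : ∀ i, 0 ≤ L i)
    (hf : ContinuousOn (fun p : ℝ × (ι → ℝ) => f p.1 p.2) (Icc 0 b ×ˢ univ))
    (hLip : ∀ x : ℝ, ∀ u v : ι → ℝ, |f x u - f x v| ≤ ∑ i, L i * |u i - v i|)
    (hq : ∀ i, q i ∈ Icc 0 1) {y z : ℝ → ℝ}
    (hyc : ContinuousOn y (Icc 0 b)) (hzc : ContinuousOn z (Icc 0 b))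
    (hy : ∀ x ∈ Icc 0 b, y x = 1 + ∫ t in 0..x, f t fun i => y (q i * t))
    (hz : ∀ x ∈ Icc 0 b, z x = 1 + ∫ t in 0..x, f t fun i => z (q i * t))
    (B : ℝ → ℝ) (hB : Continuous B) (x : ℝ) (hx : x ∈ Icc 0 b)
    (hBmono : MonotoneOn B (Icc 0 x)) (hyzB : ∀ t ∈ Icc 0 x, |y t - z t| ≤ B t) :
    |y x - z x| ≤ (∑ i, L i) * ∫ t in 0..x, B t := by
  have hsub : Icc 0 x ⊆ Icc 0 b := Icc_subset_Icc_right hx.2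
  have hcont : ∀ w, ContinuousOn w (Icc 0 b) →
      ContinuousOn (fun t => f t fun i => w (q i * t)) (Icc 0 x) := fun w hw =>
    (hf.comp_delays hq hw).mono hsub
  have hint : ∀ w, ContinuousOn w (Icc 0 b) →
      IntervalIntegrable (fun t => f t fun i => w (q i * t)) volume 0 x := fun w hw =>
    (hcont w hw).intervalIntegrable_of_Icc hx.1
  have hpointwise : ∀ t ∈ Icc 0 x,
      |(f t fun i => y (q i * t)) - f t fun i => z (q i * t)| ≤ (∑ i, L i) * B t := by
    intro t ht
    calc _ ≤ ∑ i, L i * |y (q i * t) - z (q i * t)| := hLip t _ _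
      _ ≤ ∑ i, L i * B t := by
        gcongr with i _
        · exact hL i
        have hqt : q i * t ∈ Icc 0 x := mul_mem_Icc_of_mem_unitInterval (hq i) ht
        exact (hyzB _ hqt).trans (hBmono hqt ht (mul_le_of_le_one_left ht.1 (hq i).2))
      _ = (∑ i, L i) * B t := (Finset.sum_mul _ _ _).symm
  rw [hy x hx, hz x hx, add_sub_add_left_eq_sub,
    ← intervalIntegral.integral_sub (hint y hyc) (hint z hzc),
    ← intervalIntegral.integral_const_mul]
  calc _ ≤ ∫ t in 0..x, |(f t fun i => y (q i * t)) - f t fun i => z (q i * t)| :=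
        intervalIntegral.abs_integral_le_integral_abs hx.1
    _ ≤ ∫ t in 0..x, (∑ i, L i) * B t :=
        intervalIntegral.integral_mono_on hx.1
          (((hcont y hyc).sub (hcont z hzc)).abs.intervalIntegrable_of_Icc hx.1)
          ((continuous_const.mul hB).intervalIntegrable 0 x) hpointwise

end DelayIntegralEquation

theorem statement11_general (n : ℕ) (b : ℝ)
    (L : Fin (n + 1) → ℝ) (hL : ∀ i, 0 ≤ L i)
    (f : ℝ → (Fin (n + 1) → ℝ) → ℝ)
    (hf : ContinuousOn (fun p : ℝ × (Fin (n + 1) → ℝ) => f p.1 p.2)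
      (Set.Icc 0 b ×ˢ Set.univ))
    (hLip : ∀ x : ℝ, ∀ u v : Fin (n + 1) → ℝ,
      |f x u - f x v| ≤ ∑ i, L i * |u i - v i|)
    (q : Fin (n + 1) → ℝ) (hq0 : q 0 = 1)
    (hq : ∀ i : Fin (n + 1), i ≠ 0 → 0 < q i ∧ q i < 1)
    (y z : ℝ → ℝ)
    (hyc : ContinuousOn y (Set.Icc 0 b)) (hzc : ContinuousOn z (Set.Icc 0 b))
    (hy : ∀ x ∈ Set.Icc (0 : ℝ) b,
      y x = 1 + ∫ t in (0 : ℝ)..x, f t (fun i => y (q i * t)))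
    (hz : ∀ x ∈ Set.Icc (0 : ℝ) b,
      z x = 1 + ∫ t in (0 : ℝ)..x, f t (fun i => z (q i * t))) :
    ∀ x ∈ Set.Icc (0 : ℝ) b, y x = z x := by
  have hqI : ∀ i, q i ∈ Icc 0 1 := fun i => by
    by_cases hi : i = 0
    · simp [hi, hq0]
    · exact ⟨(hq i hi).1.le, (hq i hi).2.le⟩
  obtain ⟨C, hC⟩ := isCompact_Icc.exists_bound_of_continuousOn (hyc.sub hzc)
  have hdiff := nonpos_of_le_mul_integral (Finset.sum_nonneg fun i _ => hL i) hC
    (abs_sub_le_mul_integral_of_integral_eq hL hf hLip hqI hyc hzc hy hz)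
  exact fun x hx => sub_eq_zero.1 (abs_nonpos_iff.1 (hdiff x hx))

/-- Uniqueness: if `f` is continuous on `[0,b] × ℝ^{n+1}` and Lipschitz in the state
variables with constants `L_i ≥ 0`, then any two continuous solutions on `[0,b]` of the
integral equation `w(x) = 1 + ∫_0^x f(t, w(q_0 t), …, w(q_n t)) dt` coincide on `[0,b]`. -/
theorem statement11 (n : ℕ) (b : ℝ) (hb : 0 < b)
    (L : Fin (n + 1) → ℝ) (hL : ∀ i, 0 ≤ L i)
    (f : ℝ → (Fin (n + 1) → ℝ) → ℝ)
    (hf : ContinuousOn (fun p : ℝ × (Fin (n + 1) → ℝ) => f p.1 p.2)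
      (Set.Icc 0 b ×ˢ Set.univ))
    (hLip : ∀ x : ℝ, ∀ u v : Fin (n + 1) → ℝ,
      |f x u - f x v| ≤ ∑ i, L i * |u i - v i|)
    (q : Fin (n + 1) → ℝ) (hq0 : q 0 = 1)
    (hq : ∀ i : Fin (n + 1), i ≠ 0 → 0 < q i ∧ q i < 1)
    (y z : ℝ → ℝ)
    (hyc : ContinuousOn y (Set.Icc 0 b)) (hzc : ContinuousOn z (Set.Icc 0 b))
    (hy : ∀ x ∈ Set.Icc (0 : ℝ) b,
      y x = 1 + ∫ t in (0 : ℝ)..x, f t (fun i => y (q i * t)))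
    (hz : ∀ x ∈ Set.Icc (0 : ℝ) b,
      z x = 1 + ∫ t in (0 : ℝ)..x, f t (fun i => z (q i * t))) :
    ∀ x ∈ Set.Icc (0 : ℝ) b, y x = z x :=
  statement11_general n b L hL f hf hLip q hq0 hq y z hyc hzc hy hz
end

section
/- Let α > 0, n ∈ ℕ, a_0, ..., a_n ∈ ℝ, q_0 = 1 and 0 < q_i < 1 for i = 1, ..., n. Then for every real x ≥ 0, the series R_α(ā; q̄; x) = Σ_{m=0}^∞ (x^{αm} / Γ(αm + 1)) · ∏_{j=0}^{m−1} (Σ_{i=0}^n a_i q_i^{αj}) converges (absolutely); i.e., the fractional-order special function R_α is defined for all finite values of x ≥ 0. -/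
/-!
Since `0 ≤ q i ≤ 1`, every factor of `(ā; q̄)_{α,m}` is bounded by `C = ∑ |a i|`, so the `m`-th
term is at most `(x^α C)^m / Γ(αm + 1)`. The Gamma function outgrows every geometric sequence
along `αm + 1`: with `k = ⌊αm⌋` it dominates `k!`, which eventually exceeds `(c^N)^k ≥ c^m`
once `N ≥ 2/α`. Hence `∑ y^m / Γ(αm + 1)` converges by comparison with `∑ 2^{-m}`.
-/

open Real Filter Finset
open scoped Nat

theorem Real.factorial_floor_le_Gamma_add_one {s : ℝ} (hs : 1 ≤ s) :
    (⌊s⌋₊ ! : ℝ) ≤ Gamma (s + 1) := by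
  have hk : (1 : ℝ) ≤ ⌊s⌋₊ := by exact_mod_cast Nat.le_floor (by exact_mod_cast hs)
  rw [← Gamma_nat_eq_factorial]
  exact Gamma_strictMonoOn_Ici.monotoneOn (by simp only [Set.mem_Ici]; linarith)
    (by simp only [Set.mem_Ici]; linarith) (by linarith [Nat.floor_le (zero_le_one.trans hs)])

theorem Real.eventually_pow_le_Gamma_mul_add_one {α : ℝ} (hα : 0 < α) (c : ℝ) :
    ∀ᶠ m : ℕ in atTop, c ^ m ≤ Gamma (α * m + 1) := by
  set b := max |c| 1
  set N := ⌈2 / α⌉₊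
  obtain ⟨K, hK⟩ :=
    eventually_atTop.mp (FloorSemiring.eventually_mul_pow_lt_factorial_sub 1 (b ^ N) 0)
  have hαm : Tendsto (fun m : ℕ => α * m) atTop atTop :=
    tendsto_natCast_atTop_atTop.const_mul_atTop hα
  filter_upwards [hαm.eventually_ge_atTop (max 1 K)] with m hm
  have hm1 : 1 ≤ α * m := le_of_max_le_left hm
  set k := ⌊α * m⌋₊
  have hk1 : (1 : ℝ) ≤ k := by exact_mod_cast Nat.le_floor (by exact_mod_cast hm1)
  -- `αm < k + 1 ≤ 2k`, so `m ≤ (2/α) k ≤ N k`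
  have hm_le : m ≤ N * k := by
    have hlt : α * m < k + 1 := Nat.lt_floor_add_one _
    have hm_le' : (m : ℝ) ≤ 2 / α * k := by
      rw [div_mul_eq_mul_div, le_div_iff₀ hα]
      linarith
    exact_mod_cast hm_le'.trans
      (mul_le_mul_of_nonneg_right (Nat.le_ceil _) (by positivity))
  calc c ^ m ≤ b ^ m := (le_abs_self _).trans <| by
          rw [abs_pow]; exact pow_le_pow_left₀ (abs_nonneg c) (le_max_left _ _) m
    _ ≤ b ^ (N * k) := pow_le_pow_right₀ (le_max_right _ _) hm_le
    _ = (b ^ N) ^ k := pow_mul b N k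
    _ ≤ k ! := by simpa using (hK k (Nat.le_floor (le_of_max_le_right hm))).le
    _ ≤ Gamma (α * m + 1) := factorial_floor_le_Gamma_add_one hm1

theorem Real.summable_pow_div_Gamma_mul_add_one {α : ℝ} (hα : 0 < α) (y : ℝ) :
    Summable fun m : ℕ => y ^ m / Gamma (α * m + 1) := by
  refine summable_geometric_two.of_norm_bounded_eventually_nat ?_
  filter_upwards [eventually_pow_le_Gamma_mul_add_one hα (2 * |y|)] with m hm
  have hΓ : 0 < Gamma (α * m + 1) := Gamma_pos_of_pos (by positivity)
  rw [norm_div, norm_pow, Real.norm_eq_abs, Real.norm_of_nonneg hΓ.le, div_le_iff₀ hΓ]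
  calc |y| ^ m = (1 / 2) ^ m * (2 * |y|) ^ m := by rw [← mul_pow]; ring_nf
    _ ≤ (1 / 2) ^ m * Gamma (α * m + 1) := by gcongr

theorem abs_sum_mul_rpow_le_sum_abs {ι : Type*} (s : Finset ι) (a q : ι → ℝ)
    (hq : ∀ i ∈ s, q i ∈ Set.Icc 0 1) {t : ℝ} (ht : 0 ≤ t) :
    |∑ i ∈ s, a i * q i ^ t| ≤ ∑ i ∈ s, |a i| := by
  refine (abs_sum_le_sum_abs _ _).trans (sum_le_sum fun i hi => ?_)
  obtain ⟨hq0, hq1⟩ := hq i hi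
  rw [abs_mul, abs_of_nonneg (rpow_nonneg hq0 t)]
  exact mul_le_of_le_one_right (abs_nonneg _) (rpow_le_one hq0 hq1 ht)

/-- The fractional series `R_α(ā; q̄; x) = Σ_{m=0}^∞ (x^{αm}/Γ(αm+1)) (ā; q̄)_{α,m}`
converges absolutely for every finite `x ≥ 0`. -/
theorem statement13 (α : ℝ) (hα : 0 < α) (n : ℕ) (a q : Fin (n + 1) → ℝ)
    (hq0 : q 0 = 1) (hq : ∀ i : Fin (n + 1), i ≠ 0 → 0 < q i ∧ q i < 1)
    (x : ℝ) (hx : 0 ≤ x) :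
    Summable (fun m : ℕ =>
      |x ^ (α * m) / Real.Gamma (α * m + 1) *
        ∏ j ∈ Finset.range m, ∑ i, a i * q i ^ (α * j)|) := by
  set C := ∑ i, |a i|
  have hq_mem : ∀ i ∈ (univ : Finset (Fin (n + 1))), q i ∈ Set.Icc 0 1 := fun i _ => by
    rcases eq_or_ne i 0 with rfl | hi
    · simp [hq0]
    · exact ⟨(hq i hi).1.le, (hq i hi).2.le⟩
  refine (summable_pow_div_Gamma_mul_add_one hα (x ^ α * C)).of_nonneg_of_le
    (fun m => abs_nonneg _) fun m => ?_
  have hprod : |∏ j ∈ range m, ∑ i, a i * q i ^ (α * j)| ≤ C ^ m := by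
    rw [abs_prod]
    calc ∏ j ∈ range m, |∑ i, a i * q i ^ (α * j)| ≤ ∏ _j ∈ range m, C :=
          prod_le_prod (fun _ _ => abs_nonneg _) fun j _ =>
            abs_sum_mul_rpow_le_sum_abs _ a q hq_mem (by positivity)
      _ = C ^ m := by rw [prod_const, card_range]
  calc |x ^ (α * m) / Gamma (α * m + 1) * ∏ j ∈ range m, ∑ i, a i * q i ^ (α * j)|
      = x ^ (α * m) / Gamma (α * m + 1) * |∏ j ∈ range m, ∑ i, a i * q i ^ (α * j)| := by
        rw [abs_mul, abs_of_nonneg (by positivity)]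
    _ ≤ x ^ (α * m) / Gamma (α * m + 1) * C ^ m := by gcongr
    _ = (x ^ α * C) ^ m / Gamma (α * m + 1) := by rw [mul_pow, ← rpow_mul_natCast hx]; ring
end

section
/- Let α > 0, n ∈ ℕ, q_0 = 1, 0 < q_i < 1 for i = 1, ..., n, and a_i ≥ 0 for i = 0, 1, ..., n. Then for all x with 0 ≤ x < ∞, E_α(a_0 x^α) ≤ R_α(ā; q̄; x) ≤ E_α((Σ_{i=0}^n a_i) x^α), where E_α(x) = Σ_{m=0}^∞ x^m / Γ(αm + 1) is the Mittag-Leffler function of order α. -/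
/-!
Both bounds are termwise. Since `q 0 = 1` and `0 ≤ q i ≤ 1`, every factor
`∑ i, a i * q i ^ (α * j)` of `(ā; q̄)_{α,m}` lies between `a 0` and `∑ i, a i`, so the `m`-th term
of `R_α` lies between those of the two Mittag-Leffler series. These converge because
`Γ(α m + 1) ≥ ⌊α m⌋!` beats any geometric growth in `m`.
-/

open Real Finset

open scoped Nat

namespace Real

theorem factorial_floor_le_Gamma_add_one_s14 {t : ℝ} (ht : 1 ≤ t) : (⌊t⌋₊ ! : ℝ) ≤ Gamma (t + 1) := by
  have hk : (1 : ℝ) ≤ ⌊t⌋₊ := by exact_mod_cast Nat.le_floor (by exact_mod_cast ht)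
  rw [← Gamma_nat_eq_factorial]
  exact Gamma_strictMonoOn_Ici.monotoneOn (by simp only [Set.mem_Ici]; linarith)
    (by simp only [Set.mem_Ici]; linarith) (by linarith [Nat.floor_le (zero_le_one.trans ht)])

theorem rpow_le_mul_exp_mul_Gamma_add_one {S t : ℝ} (hS : 1 ≤ S) (ht : 1 ≤ t) :
    S ^ t ≤ S * exp S * Gamma (t + 1) := by
  have hS0 : 0 ≤ S := zero_le_one.trans hS
  set k := ⌊t⌋₊
  have hpow : S ^ k ≤ exp S * k ! := by
    have := pow_div_factorial_le_exp S hS0 k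
    rwa [div_le_iff₀ (by positivity)] at this
  calc S ^ t ≤ S ^ ((k : ℝ) + 1) := rpow_le_rpow_of_exponent_le hS (Nat.lt_floor_add_one t).le
    _ = S * S ^ k := by rw [rpow_add_one (by positivity), rpow_natCast, mul_comm]
    _ ≤ S * (exp S * Gamma (t + 1)) := by
        gcongr
        exact hpow.trans (by gcongr; exact factorial_floor_le_Gamma_add_one_s14 ht)
    _ = S * exp S * Gamma (t + 1) := by ring

theorem exists_pow_div_Gamma_le {α : ℝ} (hα : 0 < α) {y : ℝ} (hy : 0 ≤ y) :
    ∃ C, ∀ m : ℕ, 1 ≤ α * m → y ^ m / Gamma (α * m + 1) ≤ C := by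
  set S := max (y ^ α⁻¹) 1
  refine ⟨S * exp S, fun m hm => ?_⟩
  have hΓ : 0 < Gamma (α * m + 1) := Gamma_pos_of_pos (by linarith)
  have hyS : y ^ m ≤ S ^ (α * m) := by
    calc y ^ m = (y ^ α⁻¹) ^ (α * m) := by
          rw [← rpow_mul hy, inv_mul_cancel_left₀ hα.ne', rpow_natCast]
      _ ≤ S ^ (α * m) := by gcongr; exact le_max_left _ _
  rw [div_le_iff₀ hΓ]
  exact hyS.trans (rpow_le_mul_exp_mul_Gamma_add_one (le_max_right _ _) hm)

theorem summable_pow_div_Gamma {α : ℝ} (hα : 0 < α) (y : ℝ) :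
    Summable fun m : ℕ => y ^ m / Gamma (α * m + 1) := by
  obtain ⟨C, hC⟩ := exists_pow_div_Gamma_le hα (by positivity : 0 ≤ 2 * |y|)
  refine Summable.of_norm_bounded_eventually_nat
    ((summable_geometric_of_lt_one (by norm_num) (by norm_num : (1 / 2 : ℝ) < 1)).mul_left C) ?_
  filter_upwards [(tendsto_natCast_atTop_atTop.const_mul_atTop hα).eventually_ge_atTop 1]
    with m hm
  have hΓ : 0 < Gamma (α * m + 1) := Gamma_pos_of_pos (by linarith)
  calc ‖y ^ m / Gamma (α * m + 1)‖ = (2 * |y|) ^ m / Gamma (α * m + 1) * (1 / 2) ^ m := by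
        rw [norm_div, norm_pow, norm_eq_abs, norm_eq_abs, abs_of_pos hΓ, div_mul_eq_mul_div,
          ← mul_pow, mul_comm 2, mul_assoc]
        norm_num
    _ ≤ C * (1 / 2) ^ m := by gcongr; exact hC m hm

end Real

section Coefficients

variable {ι : Type*} [Fintype ι] {a q : ι → ℝ} {t : ℝ}

theorem le_sum_mul_rpow {i₀ : ι} (hq₀ : q i₀ = 1) (ha : ∀ i, 0 ≤ a i) (hq : ∀ i, 0 ≤ q i) :
    a i₀ ≤ ∑ i, a i * q i ^ t := by
  calc a i₀ = a i₀ * q i₀ ^ t := by rw [hq₀, one_rpow, mul_one]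
    _ ≤ ∑ i, a i * q i ^ t :=
      single_le_sum (f := fun i => a i * q i ^ t)
        (fun i _ => mul_nonneg (ha i) (rpow_nonneg (hq i) t)) (mem_univ i₀)

theorem sum_mul_rpow_le_sum (ha : ∀ i, 0 ≤ a i) (hq : ∀ i, 0 ≤ q i ∧ q i ≤ 1) (ht : 0 ≤ t) :
    ∑ i, a i * q i ^ t ≤ ∑ i, a i :=
  sum_le_sum fun i _ =>
    mul_le_of_le_one_right (ha i) (rpow_le_one (hq i).1 (hq i).2 ht)

end Coefficients

section Comparison

variable {α x : ℝ}

theorem mul_rpow_pow_div_Gamma (hx : 0 ≤ x) (b : ℝ) (m : ℕ) :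
    (b * x ^ α) ^ m / Gamma (α * m + 1) = x ^ (α * m) / Gamma (α * m + 1) * b ^ m := by
  rw [rpow_mul hx, rpow_natCast]
  ring

theorem summable_and_tsum_rpow_div_Gamma_mul_le (hα : 0 ≤ α) (hx : 0 ≤ x) {u v : ℕ → ℝ}
    (hu : ∀ m, 0 ≤ u m) (huv : ∀ m, u m ≤ v m)
    (hv : Summable fun m : ℕ => x ^ (α * m) / Gamma (α * m + 1) * v m) :
    Summable (fun m : ℕ => x ^ (α * m) / Gamma (α * m + 1) * u m) ∧
      ∑' m : ℕ, x ^ (α * m) / Gamma (α * m + 1) * u m ≤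
        ∑' m : ℕ, x ^ (α * m) / Gamma (α * m + 1) * v m := by
  have hw : ∀ m : ℕ, 0 ≤ x ^ (α * m) / Gamma (α * m + 1) := fun m =>
    div_nonneg (rpow_nonneg hx _) (Gamma_pos_of_pos (by positivity)).le
  have hle : ∀ m : ℕ, x ^ (α * m) / Gamma (α * m + 1) * u m ≤
      x ^ (α * m) / Gamma (α * m + 1) * v m := fun m =>
    mul_le_mul_of_nonneg_left (huv m) (hw m)
  have hus := hv.of_nonneg_of_le (fun m => mul_nonneg (hw m) (hu m)) hle
  exact ⟨hus, hus.tsum_le_tsum hle hv⟩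

end Comparison

/-- Mittag-Leffler bounds: for nonnegative coefficients `a_i ≥ 0` and `0 ≤ x < ∞`,
`E_α(a_0 x^α) ≤ R_α(ā; q̄; x) ≤ E_α((Σ_{i=0}^n a_i) x^α)`, where
`E_α(x) = Σ_{m=0}^∞ x^m / Γ(αm+1)`. -/
theorem statement14 (α : ℝ) (hα : 0 < α) (n : ℕ) (a q : Fin (n + 1) → ℝ)
    (hq0 : q 0 = 1) (hq : ∀ i : Fin (n + 1), i ≠ 0 → 0 < q i ∧ q i < 1)
    (ha : ∀ i : Fin (n + 1), 0 ≤ a i)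
    (x : ℝ) (hx : 0 ≤ x) :
    (∑' m : ℕ, (a 0 * x ^ α) ^ m / Real.Gamma (α * m + 1)) ≤
        (∑' m : ℕ, x ^ (α * m) / Real.Gamma (α * m + 1) *
          ∏ j ∈ Finset.range m, ∑ i, a i * q i ^ (α * j)) ∧
      (∑' m : ℕ, x ^ (α * m) / Real.Gamma (α * m + 1) *
          ∏ j ∈ Finset.range m, ∑ i, a i * q i ^ (α * j)) ≤
        ∑' m : ℕ, ((∑ i, a i) * x ^ α) ^ m / Real.Gamma (α * m + 1) := by
  have hq01 : ∀ i, 0 ≤ q i ∧ q i ≤ 1 := fun i => by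
    rcases eq_or_ne i 0 with rfl | hi
    · simp [hq0]
    · exact ⟨(hq i hi).1.le, (hq i hi).2.le⟩
  have hlo : ∀ j : ℕ, a 0 ≤ ∑ i, a i * q i ^ (α * j) := fun j =>
    le_sum_mul_rpow hq0 ha fun i => (hq01 i).1
  have hhi : ∀ j : ℕ, ∑ i, a i * q i ^ (α * j) ≤ ∑ i, a i := fun j =>
    sum_mul_rpow_le_sum ha hq01 (by positivity)
  simp only [mul_rpow_pow_div_Gamma hx]
  have hsum : Summable fun m : ℕ => x ^ (α * m) / Gamma (α * m + 1) * (∑ i, a i) ^ m := by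
    simpa only [mul_rpow_pow_div_Gamma hx] using summable_pow_div_Gamma hα ((∑ i, a i) * x ^ α)
  obtain ⟨hmid, hupper⟩ := summable_and_tsum_rpow_div_Gamma_mul_le hα.le hx
    (fun m => prod_nonneg fun j _ => (ha 0).trans (hlo j))
    (fun m => (prod_le_prod (fun j _ => (ha 0).trans (hlo j)) fun j _ => hhi j).trans_eq
      (by rw [prod_const, card_range])) hsum
  obtain ⟨-, hlower⟩ := summable_and_tsum_rpow_div_Gamma_mul_le hα.le hx
    (fun m => pow_nonneg (ha 0) m)
    (fun m => (prod_le_prod (fun j _ => ha 0) fun j _ => hlo j).trans_eq'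
      (by rw [prod_const, card_range])) hmid
  exact ⟨hlower, hupper⟩
end

section
/- Let 0 < α ≤ 1, n ∈ ℕ, a_0, ..., a_n ∈ ℝ, q_0 = 1 and 0 < q_i < 1 for i = 1, ..., n. Then the function y(x) = R_α(ā; q̄; x) = Σ_{m=0}^∞ (x^{αm} / Γ(αm + 1)) (ā; q̄)_{α,m} satisfies y(0) = 1 and the Volterra integral equation y(x) = 1 + (1/Γ(α)) ∫_0^x (x − t)^{α−1} (Σ_{i=0}^n a_i y(q_i t)) dt for all x ≥ 0; that is, R_α solves the fractional multiple proportional delay equation D^α y(x) = Σ_{i=0}^n a_i y(q_i x), y(0) = 1, in its equivalent integral form. -/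
/-!
If `|cₘ|` grows at most geometrically, the series `y_c(x) = ∑ cₘ x^{αm} / Γ(αm + 1)` converges
for every `x ≥ 0`: log-convexity of `Γ` gives `Γ(y) y^α ≤ 2 Γ(y + α)` for `y ≥ 1`, so the ratio
test applies. The Beta integral gives `I^α [t^{αm} / Γ(αm + 1)] = x^{α(m+1)} / Γ(α(m+1) + 1)`, and
integrating termwise (dominated by the same series) shows that `I^α` shifts the coefficients:
`y_c = c₀ + I^α y_{c ∘ succ}`. For `cₘ = (ā; q̄)_{α,m}` we have `c_{m+1} = cₘ ∑ aᵢ qᵢ^{αm}`, hence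
`y_{c ∘ succ}(t) = ∑ aᵢ y_c(qᵢ t)`, and `0 < qᵢ ≤ 1` gives the bound `|cₘ| ≤ (∑ |aᵢ|)^m`.
-/

open MeasureTheory Real Filter Set

namespace Real

theorem Gamma_add_one_le_Gamma_add_mul_rpow {α x : ℝ} (hα : 0 < α) (hα1 : α ≤ 1) (hx : 0 < x) :
    Gamma (x + 1) ≤ Gamma (x + α) * (x + α) ^ (1 - α) := by
  have hxα : 0 < x + α := by linarith
  have hconv := convexOn_log_Gamma.2 (mem_Ioi.2 hxα) (mem_Ioi.2 (by linarith : 0 < x + α + 1))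
    hα.le (sub_nonneg.2 hα1) (add_sub_cancel _ _)
  have hmid : α • (x + α) + (1 - α) • (x + α + 1) = x + 1 := by simp only [smul_eq_mul]; ring
  rw [hmid] at hconv
  simp only [Function.comp, smul_eq_mul, Gamma_add_one hxα.ne',
    log_mul hxα.ne' (Gamma_pos_of_pos hxα).ne'] at hconv
  rw [← log_le_log_iff (Gamma_pos_of_pos (by linarith)) (by positivity),
    log_mul (Gamma_pos_of_pos hxα).ne' (by positivity), log_rpow hxα]
  linarith

theorem Gamma_mul_rpow_le_two_mul_Gamma_add {α x : ℝ} (hα : 0 < α) (hα1 : α ≤ 1) (hx : 1 ≤ x) :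
    Gamma x * x ^ α ≤ 2 * Gamma (x + α) := by
  have hx0 : 0 < x := by linarith
  have hpow : (x + α) ^ (1 - α) ≤ 2 * x ^ (1 - α) :=
    calc (x + α) ^ (1 - α) ≤ (2 * x) ^ (1 - α) := by gcongr; linarith
      _ = 2 ^ (1 - α) * x ^ (1 - α) := mul_rpow zero_le_two hx0.le
      _ ≤ 2 ^ (1 : ℝ) * x ^ (1 - α) := by gcongr <;> linarith
      _ = 2 * x ^ (1 - α) := by rw [rpow_one]
  have hsplit : x ^ α * x ^ (1 - α) = x := by rw [← rpow_add hx0, add_sub_cancel, rpow_one]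
  have key : Gamma x * x ^ α * x ^ (1 - α) ≤ 2 * Gamma (x + α) * x ^ (1 - α) :=
    calc Gamma x * x ^ α * x ^ (1 - α) = Gamma (x + 1) := by
          rw [mul_assoc, hsplit, Gamma_add_one hx0.ne', mul_comm]
      _ ≤ Gamma (x + α) * (x + α) ^ (1 - α) := Gamma_add_one_le_Gamma_add_mul_rpow hα hα1 hx0
      _ ≤ Gamma (x + α) * (2 * x ^ (1 - α)) := by gcongr
      _ = 2 * Gamma (x + α) * x ^ (1 - α) := by ring
  exact le_of_mul_le_mul_right key (by positivity)

theorem summable_pow_div_Gamma_mul_add {α β : ℝ} (hα : 0 < α) (hα1 : α ≤ 1) (hβ : 1 ≤ β)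
    (z : ℝ) : Summable fun m : ℕ => z ^ m / Gamma (α * m + β) := by
  refine summable_of_ratio_norm_eventually_le (r := 1 / 2) (by norm_num) ?_
  have hgrow : Tendsto (fun m : ℕ => (α * m + β) ^ α) atTop atTop :=
    (tendsto_rpow_atTop hα).comp <| tendsto_atTop_add_const_right _ _ <|
      tendsto_natCast_atTop_atTop.const_mul_atTop hα
  filter_upwards [hgrow.eventually_ge_atTop (4 * |z|)] with m hm
  set y := α * (m : ℝ) + β
  have hy : 1 ≤ y := by linarith [show 0 ≤ α * (m : ℝ) by positivity]
  have hΓy := Gamma_pos_of_pos (by linarith : 0 < y)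
  have hΓyα := Gamma_pos_of_pos (by linarith : 0 < y + α)
  have hsucc : α * ((m + 1 : ℕ) : ℝ) + β = y + α := by push_cast; ring
  rw [hsucc, norm_div, norm_div, norm_pow, norm_pow, norm_of_nonneg hΓy.le,
    norm_of_nonneg hΓyα.le, Real.norm_eq_abs, div_le_iff₀ hΓyα, pow_succ]
  have hratio := Gamma_mul_rpow_le_two_mul_Gamma_add hα hα1 hy
  calc |z| ^ m * |z| ≤ |z| ^ m * (y ^ α / 4) := by gcongr; linarith
    _ = 1 / 2 * (|z| ^ m / Gamma y) * (Gamma y * y ^ α / 2) := by field_simp; ring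
    _ ≤ 1 / 2 * (|z| ^ m / Gamma y) * Gamma (y + α) := by gcongr; linarith

theorem integral_sub_rpow_mul_rpow {α β x : ℝ} (hα : 0 < α) (hβ : -1 < β) (hx : 0 < x) :
    ∫ t in 0..x, (x - t) ^ (α - 1) * t ^ β
      = Gamma α * Gamma (β + 1) / Gamma (α + β + 1) * x ^ (α + β) := by
  have hscaled := Complex.betaIntegral_scaled (β + 1 : ℝ) α hx
  have hΓ := Complex.Gamma_mul_Gamma_eq_betaIntegral (s := ((β + 1 : ℝ) : ℂ)) (t := α)
    (by simpa using (by linarith : 0 < β + 1)) (by simpa using hα)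
  rw [show ((β + 1 : ℝ) : ℂ) + α = ((α + β + 1 : ℝ) : ℂ) by push_cast; ring,
    Complex.Gamma_ofReal, Complex.Gamma_ofReal, Complex.Gamma_ofReal] at hΓ
  apply Complex.ofReal_injective
  have hintegrand : EqOn (fun t : ℝ => (((x - t) ^ (α - 1) * t ^ β : ℝ) : ℂ))
      (fun t : ℝ => (t : ℂ) ^ (((β + 1 : ℝ) : ℂ) - 1) * ((x : ℂ) - t) ^ ((α : ℂ) - 1))
      (uIcc 0 x) := by
    intro t ht
    rw [uIcc_of_le hx.le] at ht
    simp only [Complex.ofReal_mul, Complex.ofReal_cpow (sub_nonneg.2 ht.2),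
      Complex.ofReal_cpow ht.1]
    push_cast
    ring_nf
  have hΓ0 : (Gamma (α + β + 1) : ℂ) ≠ 0 :=
    Complex.ofReal_ne_zero.2 (Gamma_pos_of_pos (by linarith)).ne'
  rw [← intervalIntegral.integral_ofReal, intervalIntegral.integral_congr hintegrand, hscaled,
    eq_div_of_mul_eq hΓ0 ((mul_comm _ _).trans hΓ.symm),
    show ((β + 1 : ℝ) : ℂ) + α - 1 = ((α + β : ℝ) : ℂ) by push_cast; ring,
    ← Complex.ofReal_cpow hx.le]
  push_cast
  ring

end Real

noncomputable def riemannLiouville (α : ℝ) (f : ℝ → ℝ) (x : ℝ) : ℝ :=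
  1 / Gamma α * ∫ t in 0..x, (x - t) ^ (α - 1) * f t

noncomputable def fractionalPowerSeries (α : ℝ) (c : ℕ → ℝ) (x : ℝ) : ℝ :=
  ∑' m : ℕ, x ^ (α * m) / Gamma (α * m + 1) * c m

theorem riemannLiouville_congr {α x : ℝ} {f g : ℝ → ℝ} (hx : 0 ≤ x) (hfg : EqOn f g (Icc 0 x)) :
    riemannLiouville α f x = riemannLiouville α g x := by
  unfold riemannLiouville
  congr 1
  refine intervalIntegral.integral_congr fun t ht => ?_
  rw [uIcc_of_le hx] at ht
  simp only [hfg ht]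

theorem intervalIntegrable_sub_rpow_mul_rpow {α β : ℝ} (hα : 0 < α) (hβ : 0 ≤ β) (x : ℝ) :
    IntervalIntegrable (fun t => (x - t) ^ (α - 1) * t ^ β) volume 0 x := by
  have hsing := (intervalIntegral.intervalIntegrable_rpow' (r := α - 1) (a := 0) (b := x)
    (by linarith)).comp_sub_left x
  rw [sub_self, sub_zero] at hsing
  exact hsing.symm.mul_continuousOn (continuous_rpow_const hβ).continuousOn

section fractionalPowerSeries

variable {α : ℝ} {c : ℕ → ℝ} {K C : ℝ}

theorem summable_rpow_div_Gamma_mul_add (hα : 0 < α) (hα1 : α ≤ 1) {β : ℝ} (hβ : 1 ≤ β)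
    (hc : ∀ m, |c m| ≤ K * C ^ m) {x : ℝ} (hx : 0 ≤ x) :
    Summable fun m : ℕ => x ^ (α * m) / Gamma (α * m + β) * c m := by
  refine Summable.of_norm_bounded
    ((summable_pow_div_Gamma_mul_add hα hα1 hβ (x ^ α * |C|)).mul_left |K|) fun m => ?_
  have hΓ := Gamma_pos_of_pos (by positivity : 0 < α * m + β)
  rw [norm_mul, norm_div, norm_of_nonneg (rpow_nonneg hx _), norm_of_nonneg hΓ.le,
    Real.norm_eq_abs, rpow_mul hx, rpow_natCast]
  calc (x ^ α) ^ m / Gamma (α * m + β) * |c m|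
      ≤ (x ^ α) ^ m / Gamma (α * m + β) * (|K| * |C| ^ m) := by
        gcongr; exact (hc m).trans <| (le_abs_self _).trans_eq <| by rw [abs_mul, abs_pow]
    _ = |K| * ((x ^ α * |C|) ^ m / Gamma (α * m + β)) := by ring

theorem riemannLiouville_fractionalPowerSeries (hα : 0 < α) (hα1 : α ≤ 1)
    (hc : ∀ m, |c m| ≤ K * C ^ m) {x : ℝ} (hx : 0 < x) :
    riemannLiouville α (fractionalPowerSeries α c) x
      = ∑' m : ℕ, x ^ (α * ↑(m + 1)) / Gamma (α * ↑(m + 1) + 1) * c m := by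
  set F : ℕ → ℝ → ℝ := fun m t => (x - t) ^ (α - 1) * t ^ (α * m) * (c m / Gamma (α * m + 1))
  have hpow (m : ℕ) (d : ℝ) : ∫ t in Ioc 0 x, (x - t) ^ (α - 1) * t ^ (α * m) * d
      = Gamma α * (x ^ α * (x ^ (α * m) / Gamma (α * m + (α + 1)))) * Gamma (α * m + 1) * d := by
    rw [integral_mul_const, ← intervalIntegral.integral_of_le hx.le,
      integral_sub_rpow_mul_rpow hα (by linarith [show 0 ≤ α * (m : ℝ) by positivity]) hx,
      rpow_add hx]
    ring_nf
  have hint (m : ℕ) : Integrable (F m) (volume.restrict (Ioc 0 x)) :=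
    ((intervalIntegrable_sub_rpow_mul_rpow hα (by positivity) x).1).mul_const _
  have hnorm (m : ℕ) : ∫ t in Ioc 0 x, ‖F m t‖
      = Gamma α * x ^ α * (x ^ (α * m) / Gamma (α * m + (α + 1)) * |c m|) := by
    have hΓ := Gamma_pos_of_pos (by positivity : 0 < α * m + 1)
    rw [setIntegral_congr_fun measurableSet_Ioc (g := fun t =>
      (x - t) ^ (α - 1) * t ^ (α * m) * |c m / Gamma (α * m + 1)|) fun t ht => ?_, hpow,
      abs_div, abs_of_pos hΓ]
    · field_simp
    · simp only [F, norm_mul, Real.norm_eq_abs,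
        abs_of_nonneg (rpow_nonneg (sub_nonneg.2 ht.2) _), abs_of_nonneg (rpow_nonneg ht.1.le _)]
  have hsum : Summable fun m => ∫ t in Ioc 0 x, ‖F m t‖ := by
    simp only [hnorm]
    exact (summable_rpow_div_Gamma_mul_add hα hα1 (by linarith) (c := fun m => |c m|)
      (by simpa only [abs_abs] using hc) hx.le).mul_left _
  have hintegrand (t : ℝ) : (x - t) ^ (α - 1) * fractionalPowerSeries α c t = ∑' m, F m t := by
    rw [fractionalPowerSeries, ← tsum_mul_left]
    exact tsum_congr fun m => by ring
  rw [riemannLiouville, intervalIntegral.integral_of_le hx.le]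
  simp only [hintegrand]
  rw [← integral_tsum_of_summable_integral_norm hint hsum, ← tsum_mul_left]
  refine tsum_congr fun m => ?_
  have hΓ := Gamma_pos_of_pos (by positivity : 0 < α * m + 1)
  have hexp : α * ((m + 1 : ℕ) : ℝ) = α + α * m := by push_cast; ring
  simp only [F, hpow, hexp, rpow_add hx, add_assoc, add_comm α]
  field_simp

theorem fractionalPowerSeries_zero (hα : 0 < α) : fractionalPowerSeries α c 0 = c 0 := by
  rw [fractionalPowerSeries, tsum_eq_single 0 fun m hm => by
    rw [zero_rpow (by positivity), zero_div, zero_mul]]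
  simp

theorem fractionalPowerSeries_eq_add_riemannLiouville (hα : 0 < α) (hα1 : α ≤ 1)
    (hc : ∀ m, |c m| ≤ K * C ^ m) {x : ℝ} (hx : 0 ≤ x) :
    fractionalPowerSeries α c x
      = c 0 + riemannLiouville α (fractionalPowerSeries α fun m => c (m + 1)) x := by
  rcases hx.eq_or_lt with rfl | hx
  · simp [fractionalPowerSeries_zero hα, riemannLiouville]
  have hc' (m : ℕ) : |c (m + 1)| ≤ K * C * C ^ m := by rw [mul_assoc, ← pow_succ']; exact hc _
  rw [riemannLiouville_fractionalPowerSeries hα hα1 hc' hx, fractionalPowerSeries,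
    (summable_rpow_div_Gamma_mul_add hα hα1 le_rfl hc hx.le).tsum_eq_zero_add]
  simp

theorem sum_mul_fractionalPowerSeries_comp_mul (hα : 0 < α) (hα1 : α ≤ 1)
    (hc : ∀ m, |c m| ≤ K * C ^ m) {ι : Type*} [Fintype ι] (a q : ι → ℝ) (hq : ∀ i, 0 ≤ q i)
    {t : ℝ} (ht : 0 ≤ t) :
    ∑ i, a i * fractionalPowerSeries α c (q i * t)
      = fractionalPowerSeries α (fun m => c m * ∑ i, a i * q i ^ (α * m)) t := by
  simp only [fractionalPowerSeries, ← tsum_mul_left]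
  rw [← Summable.tsum_finsetSum fun i _ =>
    (summable_rpow_div_Gamma_mul_add hα hα1 le_rfl hc (mul_nonneg (hq i) ht)).mul_left (a i)]
  refine tsum_congr fun m => ?_
  simp only [mul_rpow (hq _) ht, Finset.mul_sum]
  exact Finset.sum_congr rfl fun i _ => by ring

end fractionalPowerSeries

theorem abs_prod_range_sum_mul_rpow_le {α : ℝ} (hα : 0 ≤ α) {ι : Type*} [Fintype ι]
    (a q : ι → ℝ) (hq : ∀ i, 0 ≤ q i ∧ q i ≤ 1) (m : ℕ) :
    |∏ j ∈ Finset.range m, ∑ i, a i * q i ^ (α * j)| ≤ (∑ i, |a i|) ^ m := by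
  rw [Finset.abs_prod, Finset.pow_eq_prod_const]
  refine Finset.prod_le_prod (fun j _ => abs_nonneg _) fun j _ => ?_
  refine (Finset.abs_sum_le_sum_abs _ _).trans (Finset.sum_le_sum fun i _ => ?_)
  rw [abs_mul, abs_of_nonneg (rpow_nonneg (hq i).1 _)]
  exact mul_le_of_le_one_right (abs_nonneg _) (rpow_le_one (hq i).1 (hq i).2 (by positivity))

/-- For `0 < α ≤ 1`, the function `y = R_α(ā; q̄; ·)` satisfies `y(0) = 1` and the
Volterra integral equation
`y(x) = 1 + (1/Γ(α)) ∫_0^x (x - t)^{α-1} (Σ_{i=0}^n a_i y(q_i t)) dt` for all `x ≥ 0`,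
i.e. it solves `D^α y(x) = Σ_{i=0}^n a_i y(q_i x)`, `y(0) = 1`, in integral form. -/
theorem statement15 (α : ℝ) (hα : 0 < α) (hα1 : α ≤ 1) (n : ℕ)
    (a q : Fin (n + 1) → ℝ)
    (hq0 : q 0 = 1) (hq : ∀ i : Fin (n + 1), i ≠ 0 → 0 < q i ∧ q i < 1)
    (R : ℝ → ℝ)
    (hR : ∀ x : ℝ, R x = ∑' m : ℕ,
      x ^ (α * m) / Real.Gamma (α * m + 1) *
        ∏ j ∈ Finset.range m, ∑ i, a i * q i ^ (α * j)) :
    R 0 = 1 ∧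
      ∀ x : ℝ, 0 ≤ x →
        R x = 1 + (1 / Real.Gamma α) *
          ∫ t in (0 : ℝ)..x, (x - t) ^ (α - 1) * ∑ i, a i * R (q i * t) := by
  have hq' (i : Fin (n + 1)) : 0 ≤ q i ∧ q i ≤ 1 := by
    rcases eq_or_ne i 0 with rfl | hi
    · simp [hq0]
    · exact ⟨(hq i hi).1.le, (hq i hi).2.le⟩
  set P : ℕ → ℝ := fun m => ∏ j ∈ Finset.range m, ∑ i, a i * q i ^ (α * j)
  have hP (m : ℕ) : |P m| ≤ 1 * (∑ i, |a i|) ^ m := by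
    rw [one_mul]; exact abs_prod_range_sum_mul_rpow_le hα.le a q hq' m
  obtain rfl : R = fractionalPowerSeries α P := funext hR
  refine ⟨by simp [fractionalPowerSeries_zero hα, P], fun x hx => ?_⟩
  rw [fractionalPowerSeries_eq_add_riemannLiouville hα hα1 hP hx]
  refine congrArg₂ (· + ·) (by simp [P]) (riemannLiouville_congr hx fun t ht => ?_)
  rw [sum_mul_fractionalPowerSeries_comp_mul hα hα1 hP a q (fun i => (hq' i).1) ht.1]
  simp only [P, Finset.prod_range_succ]
end

section
/- Let n ∈ ℕ, a_0, ..., a_n ∈ ℝ, q_0 = 1 and 0 < q_i < 1 for i = 1, ..., n. Define the successive approximations to the equation y′(x) = Σ_{i=0}^n a_i y(q_i x), y(0) = 1, by y_0(x) = 1 and y_{m+1}(x) = ∫_0^x Σ_{i=0}^n a_i y_m(q_i t) dt. Then for every m ≥ 1 and all real x, y_m(x) = (x^m / m!) · ∏_{j=0}^{m−1} (Σ_{i=0}^n a_i q_i^j). -/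
open MeasureTheory

/-! Since `y_0` is constant, `y_m` is a monomial `c_m x^m` for every `m`; substituting into the
recursion, `y_m(q_i t) = c_m q_i^m t^m`, so one Picard step multiplies the coefficient by
`Σ_i a_i q_i^m` and integrates `t^m / m!` to `x^{m+1} / (m+1)!`. -/

theorem integral_mul_pow_div_factorial (C x : ℝ) (m : ℕ) :
    ∫ t in (0 : ℝ)..x, C * (t ^ m / m.factorial) = C * (x ^ (m + 1) / (m + 1).factorial) := by
  simp only [div_eq_mul_inv, ← mul_assoc]
  rw [intervalIntegral.integral_mul_const, intervalIntegral.integral_const_mul, integral_pow,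
    Nat.factorial_succ]
  push_cast
  field_simp
  ring

theorem successive_approximation_eq_monomial {ι : Type*} [Fintype ι] (a q : ι → ℝ)
    (y : ℕ → ℝ → ℝ) (hy0 : ∀ x, y 0 x = 1)
    (hyrec : ∀ m x, y (m + 1) x = ∫ t in (0 : ℝ)..x, ∑ i, a i * y m (q i * t))
    (m : ℕ) (x : ℝ) :
    y m x = x ^ m / m.factorial * ∏ j ∈ Finset.range m, ∑ i, a i * q i ^ j := by
  induction m generalizing x with
  | zero => simp [hy0]
  | succ m ih =>
    set P := ∏ j ∈ Finset.range m, ∑ i, a i * q i ^ j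
    have h_step : ∀ t, ∑ i, a i * y m (q i * t) =
        ((∑ i, a i * q i ^ m) * P) * (t ^ m / m.factorial) := fun t => by
      simp only [ih, mul_pow, Finset.sum_mul]
      exact Finset.sum_congr rfl fun i _ => by ring
    rw [hyrec, funext h_step, integral_mul_pow_div_factorial, Finset.prod_range_succ]
    ring

theorem statement17_general (n : ℕ) (a q : Fin (n + 1) → ℝ)
    (y : ℕ → ℝ → ℝ) (hy0 : ∀ x : ℝ, y 0 x = 1)
    (hyrec : ∀ (m : ℕ) (x : ℝ),
      y (m + 1) x = ∫ t in (0 : ℝ)..x, ∑ i, a i * y m (q i * t))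
    (m : ℕ) (x : ℝ) :
    y m x = x ^ m / (Nat.factorial m : ℝ) *
      ∏ j ∈ Finset.range m, ∑ i, a i * q i ^ j :=
  successive_approximation_eq_monomial a q y hy0 hyrec m x

/-- The successive approximations `y_0(x) = 1`,
`y_{m+1}(x) = ∫_0^x Σ_{i=0}^n a_i y_m(q_i t) dt` for the multiple proportional delay
equation `y'(x) = Σ_{i=0}^n a_i y(q_i x)`, `y(0) = 1`, are given in closed form by
`y_m(x) = (x^m/m!) ∏_{j=0}^{m-1} (Σ_{i=0}^n a_i q_i^j)` for every `m ≥ 1` and real `x`. -/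
theorem statement17 (n : ℕ) (a q : Fin (n + 1) → ℝ)
    (hq0 : q 0 = 1) (hq : ∀ i : Fin (n + 1), i ≠ 0 → 0 < q i ∧ q i < 1)
    (y : ℕ → ℝ → ℝ) (hy0 : ∀ x : ℝ, y 0 x = 1)
    (hyrec : ∀ (m : ℕ) (x : ℝ),
      y (m + 1) x = ∫ t in (0 : ℝ)..x, ∑ i, a i * y m (q i * t))
    (m : ℕ) (hm : 1 ≤ m) (x : ℝ) :
    y m x = x ^ m / (Nat.factorial m : ℝ) *
      ∏ j ∈ Finset.range m, ∑ i, a i * q i ^ j :=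
  statement17_general n a q y hy0 hyrec m x
end
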